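/- Let a₁,…,a_m be nonzero Gaussian integers with arguments θ₁,…,θ_m (so a_j = |a_j|e^{iθ_j}), let l ≥ 1 be an integer, and fix signs η_r ∈ {−1,1}, integers ν_r ∈ ℤ, and signs ε_j^{(r)} ∈ {−1,1} for 1 ≤ r ≤ l, 1 ≤ j ≤ m. Then (∏_{j=1}^{m} |a_j|) · Σ_{r=1}^{l} η_r cos(ν_r π/2 + Σ_{j=1}^{m} ε_j^{(r)} θ_j) is a rational integer; consequently, if Σ_{r=1}^{l} η_r cos(ν_r π/2 + Σ_{j=1}^{m} ε_j^{(r)} θ_j) ≠ 0 then its absolute value is at least (∏_{j=1}^{m} |a_j|)^{−1}. The same holds with sin in place of cos. -/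

import Mathlib

open scoped Real

noncomputable section

/-- The cosine sum `∑_{r} η_r cos(ν_r π/2 + ∑_j ε_j^{(r)} θ_j)`, where `θ_j = arg a_j`. -/
def Tcos {l m : ℕ} (η : Fin l → ℝ) (ν : Fin l → ℤ) (ε : Fin l → Fin m → ℝ)
    (a : Fin m → GaussianInt) : ℝ :=
  ∑ r, η r * Real.cos ((ν r : ℝ) * π / 2 +
    ∑ j, ε r j * Complex.arg (GaussianInt.toComplex (a j)))

/-- The sine sum `∑_{r} η_r sin(ν_r π/2 + ∑_j ε_j^{(r)} θ_j)`, where `θ_j = arg a_j`. -/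
def Tsin {l m : ℕ} (η : Fin l → ℝ) (ν : Fin l → ℤ) (ε : Fin l → Fin m → ℝ)
    (a : Fin m → GaussianInt) : ℝ :=
  ∑ r, η r * Real.sin ((ν r : ℝ) * π / 2 +
    ∑ j, ε r j * Complex.arg (GaussianInt.toComplex (a j)))

/-! Since `|a| e^{±iθ}` is `a` or its conjugate and `e^{iνπ/2} = iᵛ`, the number
`(∏ |a_j|) e^{i(νπ/2 + Σ ε_j θ_j)}` is a product of Gaussian integers, hence a Gaussian integer.
Its real and imaginary parts are therefore integers, and the two trigonometric sums times
`∏ |a_j|` are `±1`-combinations of them. A nonzero real `x` with `P x ∈ ℤ`, `P > 0`,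
satisfies `|x| ≥ P⁻¹`. -/

namespace GaussianInt

lemma I_mem_range_toComplex : Complex.I ∈ toComplex.range :=
  ⟨⟨0, 1⟩, by simp [toComplex_def]⟩

lemma I_zpow_mem_range_toComplex (n : ℤ) : Complex.I ^ n ∈ toComplex.range := by
  induction n using Int.induction_on with
  | zero => rw [zpow_zero]; exact one_mem _
  | succ k ih =>
    rw [zpow_add_one₀ Complex.I_ne_zero]
    exact mul_mem ih I_mem_range_toComplex
  | pred k ih =>
    rw [zpow_sub_one₀ Complex.I_ne_zero, Complex.inv_I]
    exact mul_mem ih (neg_mem I_mem_range_toComplex)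

lemma norm_mul_exp_sign_mul_arg_mem_range_toComplex (z : GaussianInt) {s : ℝ}
    (hs : s = 1 ∨ s = -1) :
    (‖toComplex z‖ : ℂ) * Complex.exp (((s * (toComplex z).arg : ℝ) : ℂ) * Complex.I) ∈
      toComplex.range := by
  rcases hs with rfl | rfl
  · rw [one_mul, Complex.norm_mul_exp_arg_mul_I]
    exact ⟨z, rfl⟩
  · refine ⟨star z, ?_⟩
    conv_lhs => rw [toComplex_star, ← Complex.norm_mul_exp_arg_mul_I (toComplex z)]
    rw [map_mul, Complex.conj_ofReal, ← Complex.exp_conj, map_mul, Complex.conj_ofReal,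
      Complex.conj_I]
    push_cast
    ring_nf

lemma re_mem_range_intCast {w : ℂ} (hw : w ∈ toComplex.range) :
    w.re ∈ (Int.castRingHom ℝ).range := by
  obtain ⟨z, rfl⟩ := hw
  exact ⟨z.re, by simp⟩

lemma im_mem_range_intCast {w : ℂ} (hw : w ∈ toComplex.range) :
    w.im ∈ (Int.castRingHom ℝ).range := by
  obtain ⟨z, rfl⟩ := hw
  exact ⟨z.im, by simp⟩

lemma prod_norm_mul_exp_mem_range_toComplex {ι : Type*} [Fintype ι] (a : ι → GaussianInt)
    (n : ℤ) {s : ι → ℝ} (hs : ∀ j, s j = 1 ∨ s j = -1) :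
    ((∏ j, ‖toComplex (a j)‖ : ℝ) : ℂ) *
        Complex.exp ((((n : ℝ) * π / 2 + ∑ j, s j * (toComplex (a j)).arg : ℝ) : ℂ) *
          Complex.I) ∈ toComplex.range := by
  have hn : Complex.exp ((n : ℂ) * (π / 2 * Complex.I)) = Complex.I ^ n := by
    rw [Complex.exp_int_mul, Complex.exp_pi_div_two_mul_I]
  have hsplit : ((∏ j, ‖toComplex (a j)‖ : ℝ) : ℂ) *
        Complex.exp ((((n : ℝ) * π / 2 + ∑ j, s j * (toComplex (a j)).arg : ℝ) : ℂ) *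
          Complex.I) =
      Complex.I ^ n * ∏ j, (‖toComplex (a j)‖ : ℂ) *
        Complex.exp (((s j * (toComplex (a j)).arg : ℝ) : ℂ) * Complex.I) := by
    rw [← hn, Finset.prod_mul_distrib, ← Complex.exp_sum, Complex.ofReal_prod]
    push_cast
    rw [add_mul, Finset.sum_mul, Complex.exp_add]
    ring_nf
  rw [hsplit]
  exact mul_mem (I_zpow_mem_range_toComplex n) (prod_mem fun j _ =>
    norm_mul_exp_sign_mul_arg_mem_range_toComplex (a j) (hs j))

end GaussianInt

lemma mul_sum_sign_mul_mem_range_intCast {ι : Type*} [Fintype ι] {P : ℝ} {η x : ι → ℝ}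
    (hη : ∀ r, η r = 1 ∨ η r = -1) (hx : ∀ r, P * x r ∈ (Int.castRingHom ℝ).range) :
    P * ∑ r, η r * x r ∈ (Int.castRingHom ℝ).range := by
  rw [Finset.mul_sum]
  refine Subring.sum_mem _ fun r _ => ?_
  rw [mul_left_comm]
  refine mul_mem ?_ (hx r)
  rcases hη r with h | h <;> rw [h]
  · exact one_mem _
  · exact neg_mem (one_mem _)

lemma inv_le_abs_of_mul_eq_intCast {P x : ℝ} (hP : 0 ≤ P) {d : ℤ} (h : P * x = d)
    (hx : x ≠ 0) : P⁻¹ ≤ |x| := by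
  rcases hP.eq_or_lt with rfl | hP
  · simp -- `0⁻¹ = 0`
  have hd : (1 : ℝ) ≤ |(d : ℝ)| := by
    have : d ≠ 0 := by rintro rfl; simp [hP.ne', hx] at h
    exact_mod_cast Int.one_le_abs this
  rw [inv_le_iff_one_le_mul₀ hP, ← abs_of_pos hP, ← abs_mul, mul_comm, h]
  exact hd

theorem trig_sum_times_product_is_integer_general
    (m : ℕ) (a : Fin m → GaussianInt)
    (l : ℕ)
    (η : Fin l → ℝ) (hη : ∀ r, η r = 1 ∨ η r = -1)
    (ν : Fin l → ℤ)
    (ε : Fin l → Fin m → ℝ) (hε : ∀ r j, ε r j = 1 ∨ ε r j = -1) :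
    (∃ d : ℤ, (∏ j, ‖GaussianInt.toComplex (a j)‖) * Tcos η ν ε a = (d : ℝ)) ∧
    (Tcos η ν ε a ≠ 0 →
      (∏ j, ‖GaussianInt.toComplex (a j)‖)⁻¹ ≤ |Tcos η ν ε a|) ∧
    (∃ d : ℤ, (∏ j, ‖GaussianInt.toComplex (a j)‖) * Tsin η ν ε a = (d : ℝ)) ∧
    (Tsin η ν ε a ≠ 0 →
      (∏ j, ‖GaussianInt.toComplex (a j)‖)⁻¹ ≤ |Tsin η ν ε a|) := by
  set P : ℝ := ∏ j, ‖GaussianInt.toComplex (a j)‖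
  have hP : 0 ≤ P := by positivity
  have hw r := GaussianInt.prod_norm_mul_exp_mem_range_toComplex a (ν r) (hε r)
  obtain ⟨c, hc⟩ : P * Tcos η ν ε a ∈ (Int.castRingHom ℝ).range :=
    mul_sum_sign_mul_mem_range_intCast hη fun r => by
      have hre := GaussianInt.re_mem_range_intCast (hw r)
      rwa [Complex.re_ofReal_mul, Complex.exp_ofReal_mul_I_re] at hre
  obtain ⟨s, hs⟩ : P * Tsin η ν ε a ∈ (Int.castRingHom ℝ).range :=
    mul_sum_sign_mul_mem_range_intCast hη fun r => by
      have him := GaussianInt.im_mem_range_intCast (hw r)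
      rwa [Complex.im_ofReal_mul, Complex.exp_ofReal_mul_I_im] at him
  exact ⟨⟨c, hc.symm⟩, inv_le_abs_of_mul_eq_intCast hP hc.symm,
    ⟨s, hs.symm⟩, inv_le_abs_of_mul_eq_intCast hP hs.symm⟩

theorem trig_sum_times_product_is_integer
    (m : ℕ) (a : Fin m → GaussianInt) (ha : ∀ j, a j ≠ 0)
    (l : ℕ) (hl : 1 ≤ l)
    (η : Fin l → ℝ) (hη : ∀ r, η r = 1 ∨ η r = -1)
    (ν : Fin l → ℤ)
    (ε : Fin l → Fin m → ℝ) (hε : ∀ r j, ε r j = 1 ∨ ε r j = -1) :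
    (∃ d : ℤ, (∏ j, ‖GaussianInt.toComplex (a j)‖) * Tcos η ν ε a = (d : ℝ)) ∧
    (Tcos η ν ε a ≠ 0 →
      (∏ j, ‖GaussianInt.toComplex (a j)‖)⁻¹ ≤ |Tcos η ν ε a|) ∧
    (∃ d : ℤ, (∏ j, ‖GaussianInt.toComplex (a j)‖) * Tsin η ν ε a = (d : ℝ)) ∧
    (Tsin η ν ε a ≠ 0 →
      (∏ j, ‖GaussianInt.toComplex (a j)‖)⁻¹ ≤ |Tsin η ν ε a|) :=
  trig_sum_times_product_is_integer_general m a l η hη ν ε hε
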